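/- Let a ≥ 1, 0 < b < 1 and p, q ∈ (0,1) with q ≤ p. Then (a+b)^(p/2 + q/2) ≤ a^p + b^q. -/
import Mathlib

theorem stmt_3 (a b p q : ℝ) (ha : 1 ≤ a) (hb0 : 0 < b) (hb1 : b < 1)
    (hp : p ∈ Set.Ioo (0:ℝ) 1) (hq : q ∈ Set.Ioo (0:ℝ) 1) (hqp : q ≤ p) :
    (a + b) ^ (p / 2 + q / 2) ≤ a ^ p + b ^ q := by
  obtain ⟨hp0, hp1⟩ := hp
  obtain ⟨hq0, hq1⟩ := hq
  have hr1' : p / 2 + q / 2 ≤ 1 := by linarith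
  have hr0 : (0:ℝ) ≤ p / 2 + q / 2 := by linarith
  have ha0 : (0:ℝ) ≤ a := by linarith
  have h1 : (a + b) ^ (p / 2 + q / 2) ≤ a ^ (p / 2 + q / 2) + b ^ (p / 2 + q / 2) := by
    have := NNReal.rpow_add_le_add_rpow (a.toNNReal) (b.toNNReal) hr0 hr1'
    have h2 := NNReal.coe_le_coe.2 this
    push_cast at h2
    rwa [Real.coe_toNNReal a ha0, Real.coe_toNNReal b hb0.le] at h2
  refine h1.trans (add_le_add ?_ ?_)
  · exact Real.rpow_le_rpow_of_exponent_le ha (by linarith)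
  · exact Real.rpow_le_rpow_of_exponent_ge hb0 hb1.le (by linarith)
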